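/- Let R be a commutative ring, D a subring of R with the same identity 1, and I an ideal of R⟨X⟩ = R⟨X₁,...,Xₙ⟩ generated by a subset G ⊆ D⟨X⟩ which is a monic Gröbner basis of I in R⟨X⟩ with respect to a monomial ordering on B_R. Set Λ = (D⟨X⟩ + I)/I ⊆ R⟨X⟩/I. Then for any proper ideal ω of D such that G ⊄ ωD⟨X⟩, there is an isomorphism of k-algebras Λ/ωΛ ≅ k⟨X⟩/⟨Ḡ⟩, where k = D/ω, k⟨X⟩ = k⟨X₁,...,Xₙ⟩ is the free k-algebra, and Ḡ is the canonical image of G in D⟨X⟩/ωD⟨X⟩ ≅ k⟨X⟩. -/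

import Mathlib

open scoped Classical

/-- Words in the alphabet `X₁,...,Xₙ`: the standard basis `B` of monomials of the free algebra. -/
abbrev Word (n : ℕ) : Type := FreeMonoid (Fin n)

/-- The free `R`-algebra `R⟨X₁,...,Xₙ⟩`, realized as the monoid algebra on words. -/
abbrev FreeAlg (R : Type) [CommRing R] (n : ℕ) : Type := MonoidAlgebra R (Word n)

/-- `v` divides `u` as words: `u = w * v * s` for some words `w, s`. -/
def WordDvd {n : ℕ} (v u : Word n) : Prop := ∃ w s : Word n, u = w * v * s

/-- A monomial ordering on the words in `X₁,...,Xₙ`: a well-ordering `≺` such that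
(M1) `u ≺ v` implies `w*u*s ≺ w*v*s`, and (M2) `w = u*v` implies `u ⪯ w` and `v ⪯ w`. -/
structure MonomialOrdering (n : ℕ) where
  lt : Word n → Word n → Prop
  strictTotal : IsStrictTotalOrder (Word n) lt
  wellFounded : WellFounded lt
  mul_compat : ∀ w u v s : Word n, lt u v → lt (w * u * s) (w * v * s)
  factor_le : ∀ u v : Word n, ¬ lt (u * v) u ∧ ¬ lt (u * v) v

namespace MonomialOrdering

/-- `u ⪯ v` for a monomial ordering. -/
def le {n : ℕ} (o : MonomialOrdering n) (u v : Word n) : Prop := u = v ∨ o.lt u v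

end MonomialOrdering

/-- The leading monomial `LM(f)` of `f`: the `≺`-greatest word occurring in `f`
(with junk value `1` if `f = 0`). -/
noncomputable def LM {R : Type} [CommRing R] {n : ℕ} (o : MonomialOrdering n)
    (f : FreeAlg R n) : Word n :=
  if h : ∃ w, w ∈ f.coeff.support ∧ ∀ u ∈ f.coeff.support, o.le u w then h.choose else 1

/-- The leading coefficient `LC(f)` of `f`: the coefficient of `LM(f)` in `f`. -/
noncomputable def LC {R : Type} [CommRing R] {n : ℕ} (o : MonomialOrdering n)
    (f : FreeAlg R n) : R := f.coeff (LM o f)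

/-- A subset `G` is monic if every `g ∈ G` is nonzero with leading coefficient `1`. -/
def IsMonicSet {R : Type} [CommRing R] {n : ℕ} (o : MonomialOrdering n)
    (G : Set (FreeAlg R n)) : Prop := ∀ g ∈ G, g ≠ 0 ∧ LC o g = 1

/-- `G` is a monic Gröbner basis of the two-sided ideal `I`: a monic subset of `I` such that
the leading monomial of every nonzero `f ∈ I` is divisible by `LM(g)` for some `g ∈ G`. -/
def IsMonicGB {R : Type} [CommRing R] {n : ℕ} (o : MonomialOrdering n)
    (G : Set (FreeAlg R n)) (I : TwoSidedIdeal (FreeAlg R n)) : Prop :=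
  (∀ g ∈ G, g ∈ I) ∧ IsMonicSet o G ∧
    ∀ f : FreeAlg R n, f ∈ I → f ≠ 0 → ∃ g ∈ G, WordDvd (LM o g) (LM o f)

/-- The word `u` viewed as a monomial (with coefficient `1`) of the free algebra. -/
noncomputable def mono (R : Type) [CommRing R] {n : ℕ} (u : Word n) : FreeAlg R n :=
  MonoidAlgebra.single u 1

/-- `f` has a Gröbner representation `f = Σ_{i} λ_i u_i g_i v_i` with
`LM(u_i g_i v_i) ⪯ LM(f)` whenever `λ_i ≠ 0`. -/
def HasGroebnerRep {R : Type} [CommRing R] {n : ℕ} (o : MonomialOrdering n)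
    (G : Set (FreeAlg R n)) (f : FreeAlg R n) : Prop :=
  ∃ (m : ℕ) (lam : Fin m → R) (u v : Fin m → Word n) (g : Fin m → FreeAlg R n),
    (∀ i, g i ∈ G) ∧
    f = ∑ i, lam i • (mono R (u i) * g i * mono R (v i)) ∧
    ∀ i, lam i ≠ 0 → o.le (LM o (mono R (u i) * g i * mono R (v i))) (LM o f)

/-- The set `N(G)` of normal words (mod `G`): words divisible by no `LM(g)`, `g ∈ G`. -/
def NSet {R : Type} [CommRing R] {n : ℕ} (o : MonomialOrdering n)
    (G : Set (FreeAlg R n)) : Set (Word n) :=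
  {u : Word n | ∀ g ∈ G, ¬ WordDvd (LM o g) u}

/-- `f` is a normal element (mod `G`): every word occurring in `f` is normal. -/
def IsNormal {R : Type} [CommRing R] {n : ℕ} (o : MonomialOrdering n)
    (G : Set (FreeAlg R n)) (f : FreeAlg R n) : Prop :=
  ∀ u ∈ f.coeff.support, u ∈ NSet o G

/-- `G` is LM-reduced: `LM(g) ∤ LM(g')` for distinct `g, g' ∈ G`. -/
def LMReduced {R : Type} [CommRing R] {n : ℕ} (o : MonomialOrdering n)
    (G : Set (FreeAlg R n)) : Prop :=
  ∀ g ∈ G, ∀ g' ∈ G, g ≠ g' → ¬ WordDvd (LM o g) (LM o g')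

/-- The canonical inclusion `S⟨X₁,...,Xₙ⟩ → T⟨X₁,...,Xₙ⟩` induced by the coefficient
algebra map `S → T`; it sends `Σ λ_u · u` to `Σ λ_u · u` (coefficients mapped along
`algebraMap S T`). -/
noncomputable def coeffIncl (S : Type) [CommRing S] (T : Type) [CommRing T] [Algebra S T]
    (n : ℕ) : FreeAlg S n →ₐ[S] FreeAlg T n :=
  MonoidAlgebra.lift S (FreeAlg T n) (Word n) (MonoidAlgebra.of T (Word n))

/-- The quotient ring `A = R⟨X₁,...,Xₙ⟩/I` of the free algebra by a two-sided ideal `I`. -/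
abbrev QuotAlg {R : Type} [CommRing R] {n : ℕ} (I : TwoSidedIdeal (FreeAlg R n)) : Type :=
  RingQuot (fun a b : FreeAlg R n => a - b ∈ I)

/-- The canonical projection `R⟨X₁,...,Xₙ⟩ → A = R⟨X⟩/I`. -/
noncomputable def quotProj {R : Type} [CommRing R] {n : ℕ}
    (I : TwoSidedIdeal (FreeAlg R n)) : FreeAlg R n →+* QuotAlg I :=
  RingQuot.mkRingHom (fun a b : FreeAlg R n => a - b ∈ I)

/-- The `D`-subalgebra `Λ = (D⟨X⟩ + I)/I` of `A = R⟨X⟩/I`: the image of `D⟨X⟩` in `A`. -/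
noncomputable def Lam {R : Type} [CommRing R] {n : ℕ} (D : Subring R)
    (I : TwoSidedIdeal (FreeAlg R n)) : Subring (QuotAlg I) :=
  ((quotProj I).comp (coeffIncl ↥D R n).toRingHom).range

/-- The canonical structure map `D → Λ`, `d ↦ class of the constant d`. -/
noncomputable def LamStruct {R : Type} [CommRing R] {n : ℕ} (D : Subring R)
    (I : TwoSidedIdeal (FreeAlg R n)) : ↥D →+* ↥(Lam D I) :=
  (((quotProj I).comp (coeffIncl ↥D R n).toRingHom).rangeRestrict).comp
    MonoidAlgebra.singleOneRingHom

/-- The quotient `Λ/ωΛ` of `Λ` by the (two-sided) ideal generated by the image of `ω`. -/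
abbrev LamQuot {R : Type} [CommRing R] {n : ℕ} (D : Subring R) (ω : Ideal ↥D)
    (I : TwoSidedIdeal (FreeAlg R n)) : Type :=
  RingQuot (fun a b : ↥(Lam D I) => (∃ d ∈ ω, a = LamStruct D I d) ∧ b = 0)

/-!
`Λ` is `D⟨X⟩` modulo `I ∩ D⟨X⟩`. Because `G ⊆ D⟨X⟩` is monic, one step of division by `G`
cancels the leading term of an element of `D⟨X⟩` without leaving `D⟨X⟩`; since `G` is a Gröbner
basis, this division applies to every element of `I ∩ D⟨X⟩`, so `I ∩ D⟨X⟩` is the two-sided ideal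
of `D⟨X⟩` generated by `G`. Hence both `Λ/ωΛ` and `k⟨X⟩/⟨Ḡ⟩` are `D⟨X⟩` modulo the ideal generated
by `G` and the constants in `ω`, and the two quotient maps from `D⟨X⟩` factor through each other.
-/

namespace MonomialOrdering

variable {n : ℕ} (o : MonomialOrdering n)

/-- The linear order on words whose `≤` is `o.le` and whose `<` is `o.lt`. -/
noncomputable abbrev toLinearOrder : LinearOrder (Word n) :=
  haveI := o.strictTotal
  linearOrderOfSTO o.lt

variable {o}

theorem lt_of_le_of_ne {a b : Word n} (hab : o.le a b) (hne : a ≠ b) : o.lt a b :=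
  @_root_.lt_of_le_of_ne _ o.toLinearOrder.toPartialOrder a b hab hne

variable (o) in
theorem exists_max (s : Finset (Word n)) (hs : s.Nonempty) : ∃ w ∈ s, ∀ u ∈ s, o.le u w :=
  letI := o.toLinearOrder
  ⟨s.max' hs, s.max'_mem hs, fun u hu => s.le_max' u hu⟩

end MonomialOrdering

section LeadingMonomial

variable {R : Type} [CommRing R] {n : ℕ} (o : MonomialOrdering n)

theorem LM_spec {f : FreeAlg R n} (hf : f ≠ 0) :
    LM o f ∈ f.coeff.support ∧ ∀ u ∈ f.coeff.support, o.le u (LM o f) := by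
  have hmax := o.exists_max f.coeff.support
    (Finsupp.support_nonempty_iff.2 fun h0 => hf (MonoidAlgebra.coeff_injective h0))
  rw [LM, dif_pos hmax]
  exact hmax.choose_spec

theorem le_LM {f : FreeAlg R n} {u : Word n} (hu : u ∈ f.coeff.support) : o.le u (LM o f) :=
  (LM_spec o (by rintro rfl; simp at hu)).2 u hu

theorem LM_congr_support {S : Type} [CommRing S] {f : FreeAlg R n} {g : FreeAlg S n}
    (h : f.coeff.support = g.coeff.support) : LM o f = LM o g := by
  simp only [LM, h]

end LeadingMonomial

section CoeffChange

variable (S : Type) [CommRing S] (T : Type) [CommRing T] [Algebra S T] {n : ℕ}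

theorem coeffIncl_single (u : Word n) (d : S) :
    coeffIncl S T n (MonoidAlgebra.single u d) = MonoidAlgebra.single u (algebraMap S T d) := by
  rw [coeffIncl, MonoidAlgebra.lift_single, MonoidAlgebra.of_apply, MonoidAlgebra.smul_single,
    Algebra.algebraMap_eq_smul_one]

theorem coeff_coeffIncl (f : FreeAlg S n) (w : Word n) :
    (coeffIncl S T n f).coeff w = algebraMap S T (f.coeff w) := by
  induction f using MonoidAlgebra.induction_linear with
  | zero => simp
  | add f g hf hg => simp only [map_add, MonoidAlgebra.coeff_add, Finsupp.add_apply, hf, hg]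
  | single u d =>
    rw [coeffIncl_single, MonoidAlgebra.coeff_single, MonoidAlgebra.coeff_single]
    rcases eq_or_ne u w with rfl | hne
    · simp only [Finsupp.single_eq_same]
    · simp only [Finsupp.single_eq_of_ne' hne, map_zero]

theorem coeffIncl_surjective (hsurj : Function.Surjective (algebraMap S T)) :
    Function.Surjective (coeffIncl S T n) := by
  intro F
  induction F using MonoidAlgebra.induction_linear with
  | zero => exact ⟨0, map_zero _⟩
  | add f g hf hg =>
    obtain ⟨f', rfl⟩ := hf
    obtain ⟨g', rfl⟩ := hg
    exact ⟨f' + g', map_add _ _ _⟩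
  | single u c =>
    obtain ⟨d, rfl⟩ := hsurj c
    exact ⟨MonoidAlgebra.single u d, coeffIncl_single S T u d⟩

variable {S T} (hinj : Function.Injective (algebraMap S T))
include hinj

theorem coeffIncl_injective : Function.Injective (coeffIncl S T n) := fun f g h =>
  MonoidAlgebra.coeff_injective <| Finsupp.ext fun w =>
    hinj (by rw [← coeff_coeffIncl, ← coeff_coeffIncl, h])

theorem support_coeffIncl (f : FreeAlg S n) :
    (coeffIncl S T n f).coeff.support = f.coeff.support := by
  ext w
  simp only [Finsupp.mem_support_iff, coeff_coeffIncl, ne_eq, map_eq_zero_iff _ hinj]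

theorem LM_coeffIncl (o : MonomialOrdering n) (f : FreeAlg S n) :
    LM o (coeffIncl S T n f) = LM o f :=
  LM_congr_support o (support_coeffIncl hinj f)

theorem LC_coeffIncl (o : MonomialOrdering n) (f : FreeAlg S n) :
    LC o (coeffIncl S T n f) = algebraMap S T (LC o f) := by
  rw [LC, LM_coeffIncl hinj, coeff_coeffIncl, LC]

end CoeffChange

section WordConjugation

variable {R : Type} [CommRing R] {n : ℕ}

theorem mono_mul_mul_eq_mapDomain (u v : Word n) (g : FreeAlg R n) :
    mono R u * g * mono R v = MonoidAlgebra.mapDomain (fun x => u * x * v) g := by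
  induction g using MonoidAlgebra.induction_linear with
  | zero => simp
  | add f g hf hg => rw [mul_add, add_mul, hf, hg, MonoidAlgebra.mapDomain_add]
  | single x c =>
    rw [MonoidAlgebra.mapDomain_single, mono, mono, MonoidAlgebra.single_mul_single,
      MonoidAlgebra.single_mul_single, one_mul, mul_one]

theorem Word.mul_mul_injective (u v : Word n) : Function.Injective (fun x : Word n => u * x * v) :=
  fun _ _ h => mul_left_cancel (mul_right_cancel h)

theorem support_mono_mul_mul (u v : Word n) (g : FreeAlg R n) :
    (mono R u * g * mono R v).coeff.support = g.coeff.support.image (fun x => u * x * v) := by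
  rw [mono_mul_mul_eq_mapDomain]
  exact Finsupp.mapDomain_support_of_injective (Word.mul_mul_injective u v) g.coeff

theorem coeff_mono_mul_mul (u v : Word n) (g : FreeAlg R n) (x : Word n) :
    (mono R u * g * mono R v).coeff (u * x * v) = g.coeff x := by
  rw [mono_mul_mul_eq_mapDomain]
  exact Finsupp.mapDomain_apply (Word.mul_mul_injective u v) g.coeff x

end WordConjugation

section Division

variable {n : ℕ} (o : MonomialOrdering n)

theorem lt_LM_of_mem_support_sub {R : Type} [CommRing R] {f g : FreeAlg R n} {w s : Word n}
    (hLC : LC o g = 1) (hdvd : LM o f = w * LM o g * s) {x : Word n}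
    (hx : x ∈ (f - MonoidAlgebra.single 1 (LC o f) * (mono R w * g * mono R s)).coeff.support) :
    o.lt x (LM o f) := by
  set p := mono R w * g * mono R s
  have hcoeff : ∀ y, (f - MonoidAlgebra.single 1 (LC o f) * p).coeff y =
      f.coeff y - LC o f * p.coeff y := fun y => by
    rw [MonoidAlgebra.coeff_sub, Finsupp.sub_apply, MonoidAlgebra.coeff_single_one_mul]
  have hne : x ≠ LM o f := by
    rintro rfl
    have hp : p.coeff (LM o f) = 1 := by rw [hdvd, coeff_mono_mul_mul]; exact hLC
    apply Finsupp.mem_support_iff.1 hx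
    rw [hcoeff, hp, mul_one]
    exact sub_self _
  have hsupp : x ∈ f.coeff.support ∨ x ∈ p.coeff.support := by
    by_contra! h
    rw [Finsupp.mem_support_iff, hcoeff, Finsupp.notMem_support_iff.1 h.1,
      Finsupp.notMem_support_iff.1 h.2, mul_zero, sub_zero] at hx
    exact hx rfl
  rcases hsupp with hxf | hxp
  · exact o.lt_of_le_of_ne (le_LM o hxf) hne
  · rw [support_mono_mul_mul] at hxp
    obtain ⟨y, hy, rfl⟩ := Finset.mem_image.mp hxp
    have hyne : y ≠ LM o g := by
      rintro rfl
      exact hne hdvd.symm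
    rw [hdvd]
    exact o.mul_compat w y (LM o g) s (o.lt_of_le_of_ne (le_LM o hy) hyne)

theorem mem_span_of_coeffIncl_mem {S T : Type} [CommRing S] [CommRing T] [Algebra S T]
    (hinj : Function.Injective (algebraMap S T)) {G : Set (FreeAlg S n)}
    {I : TwoSidedIdeal (FreeAlg T n)} (hGB : IsMonicGB o (coeffIncl S T n '' G) I)
    {f : FreeAlg S n} (hf : coeffIncl S T n f ∈ I) : f ∈ TwoSidedIdeal.span G := by
  obtain ⟨hGI, hmonic, hdiv⟩ := hGB
  have hspan : TwoSidedIdeal.span G ≤ TwoSidedIdeal.comap (coeffIncl S T n) I :=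
    TwoSidedIdeal.span_le.2 fun g hg => (TwoSidedIdeal.mem_comap _).2 (hGI _ ⟨g, hg, rfl⟩)
  induction hm : LM o f using o.wellFounded.induction generalizing f with
  | _ m ih =>
  subst hm
  by_cases hf0 : f = 0
  · rw [hf0]
    exact zero_mem _
  obtain ⟨_, ⟨g, hg, rfl⟩, w, s, hdvd⟩ :=
    hdiv _ hf ((map_ne_zero_iff _ (coeffIncl_injective hinj)).2 hf0)
  have hLC : LC o g = 1 :=
    hinj (by rw [← LC_coeffIncl hinj, (hmonic _ ⟨g, hg, rfl⟩).2, map_one])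
  rw [LM_coeffIncl hinj, LM_coeffIncl hinj] at hdvd
  set q := MonoidAlgebra.single 1 (LC o f) * (mono S w * g * mono S s)
  have hq : q ∈ TwoSidedIdeal.span G := by
    refine TwoSidedIdeal.mul_mem_left _ _ _ ?_
    rw [mul_assoc]
    exact TwoSidedIdeal.mul_mem_left _ _ _
      (TwoSidedIdeal.mul_mem_right _ _ _ (TwoSidedIdeal.subset_span hg))
  have hfq : coeffIncl S T n (f - q) ∈ I := by
    rw [map_sub]
    exact TwoSidedIdeal.sub_mem _ hf ((TwoSidedIdeal.mem_comap _).1 (hspan hq))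
  rw [← sub_add_cancel f q]
  refine TwoSidedIdeal.add_mem _ ?_ hq
  by_cases h0 : f - q = 0
  · rw [h0]
    exact zero_mem _
  exact ih _ (lt_LM_of_mem_support_sub o hLC hdvd (LM_spec o h0).1) hfq rfl

end Division

theorem quotProj_eq_zero_iff {R : Type} [CommRing R] {n : ℕ} {I : TwoSidedIdeal (FreeAlg R n)}
    {x : FreeAlg R n} : quotProj I x = 0 ↔ x ∈ I := by
  refine ⟨fun hx => ?_, fun hx => ?_⟩
  · let ν : QuotAlg I →+* I.ringCon.Quotient :=
      RingQuot.lift ⟨I.ringCon.mk', fun a b hab => (RingCon.eq _).2 ((I.rel_iff a b).2 hab)⟩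
    have hν : ν (quotProj I x) = I.ringCon.mk' x := RingQuot.lift_mkRingHom_apply _ _ x
    rw [← TwoSidedIdeal.ker_ringCon_mk' I, TwoSidedIdeal.mem_ker, ← hν, hx, map_zero]
  · have hrel : quotProj I x = quotProj I 0 := RingQuot.mkRingHom_rel (by rwa [sub_zero])
    rwa [map_zero] at hrel

theorem RingQuot.exists_lift_of_surjective {A B C : Type*} [Ring A] [Ring B] [Ring C]
    {p : A →+* B} (hp : Function.Surjective p) {r : B → B → Prop} (g : A →+* C)
    (hker : ∀ x, p x = 0 → g x = 0)
    (hr : ∀ a b, r a b → ∃ x y, p x = a ∧ p y = b ∧ g x = g y) :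
    ∃ F : RingQuot r →+* C, ∀ x, F (RingQuot.mkRingHom r (p x)) = g x := by
  let ψ : B →+* C := p.liftOfSurjective hp ⟨g, fun x hx => hker x hx⟩
  have hψ : ∀ x, ψ (p x) = g x := p.liftOfSurjective_comp_apply hp _
  refine ⟨RingQuot.lift ⟨ψ, ?_⟩, fun x => by rw [RingQuot.lift_mkRingHom_apply, hψ]⟩
  intro a b hab
  obtain ⟨x, y, rfl, rfl, hxy⟩ := hr a b hab
  rw [hψ, hψ, hxy]

theorem RingHom.exists_ringEquiv_of_factor {A B C : Type*} [Semiring A] [Semiring B]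
    [Semiring C] {f : A →+* B} {g : A →+* C} (hf : Function.Surjective f)
    (hg : Function.Surjective g) {u : B →+* C} {v : C →+* B} (hu : ∀ x, u (f x) = g x)
    (hv : ∀ x, v (g x) = f x) : ∃ e : B ≃+* C, ∀ x, e (f x) = g x :=
  ⟨RingEquiv.ofRingHom u v (RingHom.ext <| hg.forall.2 fun x => by simp [hu, hv])
    (RingHom.ext <| hf.forall.2 fun x => by simp [hu, hv]), hu⟩

section Reduction

variable {A : Type} [CommRing A] {n : ℕ} (ω : Ideal A) (G : Set (FreeAlg A n))

/-- `k⟨X⟩/⟨Ḡ⟩` for `k = A/ω`. -/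
abbrev ReductionQuot : Type :=
  RingQuot (fun a b : FreeAlg (A ⧸ ω) n => a ∈ coeffIncl A (A ⧸ ω) n '' G ∧ b = 0)

noncomputable def reductionMk : FreeAlg A n →+* ReductionQuot ω G :=
  (RingQuot.mkRingHom _).comp (coeffIncl A (A ⧸ ω) n).toRingHom

theorem reductionMk_surjective : Function.Surjective (reductionMk ω G) :=
  (RingQuot.mkRingHom_surjective _).comp (coeffIncl_surjective _ _ Ideal.Quotient.mk_surjective)

theorem reductionMk_single (u : Word n) (d : A) :
    reductionMk ω G (MonoidAlgebra.single u d) =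
      RingQuot.mkRingHom _ (MonoidAlgebra.single u (Ideal.Quotient.mk ω d)) :=
  congrArg (RingQuot.mkRingHom _) (coeffIncl_single A (A ⧸ ω) u d)

theorem reductionMk_eq_zero_of_mem_span {x : FreeAlg A n} (hx : x ∈ TwoSidedIdeal.span G) :
    reductionMk ω G x = 0 := by
  have hG : TwoSidedIdeal.span G ≤ TwoSidedIdeal.ker (reductionMk ω G) :=
    TwoSidedIdeal.span_le.2 fun g hg => (TwoSidedIdeal.mem_ker _).2 <|
      (RingQuot.mkRingHom_rel ⟨⟨g, hg, rfl⟩, rfl⟩).trans (map_zero _)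
  exact (TwoSidedIdeal.mem_ker _).1 (hG hx)

theorem coeff_mem_of_coeffIncl_eq_zero {x : FreeAlg A n} (hx : coeffIncl A (A ⧸ ω) n x = 0)
    (u : Word n) : x.coeff u ∈ ω := by
  rw [← Ideal.Quotient.eq_zero_iff_mem, ← Ideal.Quotient.algebraMap_eq, ← coeff_coeffIncl, hx]
  rfl

end Reduction

section Lam

variable {R : Type} [CommRing R] {n : ℕ} (D : Subring R) (I : TwoSidedIdeal (FreeAlg R n))
  (ω : Ideal D)

noncomputable def toLam : FreeAlg D n →+* Lam D I :=
  ((quotProj I).comp (coeffIncl D R n).toRingHom).rangeRestrict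

theorem toLam_eq_zero_iff {x : FreeAlg D n} : toLam D I x = 0 ↔ coeffIncl D R n x ∈ I :=
  Subtype.ext_iff.trans quotProj_eq_zero_iff

noncomputable def lamQuotMk : FreeAlg D n →+* LamQuot D ω I :=
  (RingQuot.mkRingHom _).comp (toLam D I)

theorem lamQuotMk_surjective : Function.Surjective (lamQuotMk D I ω) :=
  (RingQuot.mkRingHom_surjective _).comp (RingHom.rangeRestrict_surjective _)

theorem lamQuotMk_eq_zero_of_coeff_mem {x : FreeAlg D n} (hx : ∀ u, x.coeff u ∈ ω) :
    lamQuotMk D I ω x = 0 := by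
  rw [← MonoidAlgebra.sum_coeff_single x, map_finsuppSum]
  refine Finset.sum_eq_zero fun u _ => ?_
  have hconst : lamQuotMk D I ω (MonoidAlgebra.single 1 (x.coeff u)) = 0 :=
    (RingQuot.mkRingHom_rel ⟨⟨x.coeff u, hx u, rfl⟩, rfl⟩).trans (map_zero _)
  have hsplit : MonoidAlgebra.single u (x.coeff u) =
      MonoidAlgebra.single u 1 * MonoidAlgebra.single 1 (x.coeff u) := by
    rw [MonoidAlgebra.single_mul_single, mul_one, one_mul]
  change lamQuotMk D I ω (MonoidAlgebra.single u (x.coeff u)) = 0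
  rw [hsplit, map_mul, hconst, mul_zero]

theorem exists_lamQuot_lift (o : MonomialOrdering n) {G : Set (FreeAlg D n)}
    (hGB : IsMonicGB o (coeffIncl D R n '' G) I) :
    ∃ u : LamQuot D ω I →+* ReductionQuot ω G, ∀ x, u (lamQuotMk D I ω x) = reductionMk ω G x := by
  refine RingQuot.exists_lift_of_surjective (RingHom.rangeRestrict_surjective _) _
    (fun x hx => ?_) ?_
  · exact reductionMk_eq_zero_of_mem_span ω G <|
      mem_span_of_coeffIncl_mem o Subtype.val_injective hGB ((toLam_eq_zero_iff D I).1 hx)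
  · rintro _ _ ⟨⟨d, hd, rfl⟩, rfl⟩
    refine ⟨MonoidAlgebra.single 1 d, 0, rfl, map_zero _, ?_⟩
    rw [map_zero, reductionMk_single, Ideal.Quotient.eq_zero_iff_mem.2 hd,
      MonoidAlgebra.single_zero, map_zero]

theorem exists_reductionQuot_lift {G : Set (FreeAlg D n)} (hGI : ∀ g ∈ G, coeffIncl D R n g ∈ I) :
    ∃ v : ReductionQuot ω G →+* LamQuot D ω I, ∀ x, v (reductionMk ω G x) = lamQuotMk D I ω x := by
  refine RingQuot.exists_lift_of_surjective
    (coeffIncl_surjective _ _ Ideal.Quotient.mk_surjective) _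
    (fun x hx => lamQuotMk_eq_zero_of_coeff_mem D I ω (coeff_mem_of_coeffIncl_eq_zero ω hx)) ?_
  rintro _ _ ⟨⟨g, hg, rfl⟩, rfl⟩
  refine ⟨g, 0, rfl, map_zero _, ?_⟩
  rw [map_zero, lamQuotMk, RingHom.comp_apply, (toLam_eq_zero_iff D I).2 (hGI g hg), map_zero]

end Lam

theorem good_reduction_iso_general {R : Type} [CommRing R] {n : ℕ} (o : MonomialOrdering n)
    (D : Subring R) (G : Set (FreeAlg ↥D n)) (I : TwoSidedIdeal (FreeAlg R n))
    (hGB : IsMonicGB o (⇑(coeffIncl ↥D R n) '' G) I)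
    (ω : Ideal ↥D) :
    ∃ e : LamQuot D ω I ≃+*
        RingQuot (fun a b : FreeAlg (↥D ⧸ ω) n =>
          a ∈ ⇑(coeffIncl ↥D (↥D ⧸ ω) n) '' G ∧ b = 0),
      ∀ d : ↥D,
        e (RingQuot.mkRingHom _ (LamStruct D I d)) =
          RingQuot.mkRingHom _
            (MonoidAlgebra.singleOneRingHom (Ideal.Quotient.mk ω d)) := by
  obtain ⟨u, hu⟩ := exists_lamQuot_lift D I ω o hGB
  obtain ⟨v, hv⟩ := exists_reductionQuot_lift D I ω fun g hg => hGB.1 _ ⟨g, hg, rfl⟩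
  obtain ⟨e, he⟩ := RingHom.exists_ringEquiv_of_factor (lamQuotMk_surjective D I ω)
    (reductionMk_surjective ω G) hu hv
  exact ⟨e, fun d => (he (MonoidAlgebra.single 1 d)).trans (reductionMk_single ω G 1 d)⟩

/-- **Theorem 5.2 (iii).** Let `R` be a commutative ring, `D` a subring of `R` with the same
identity `1`, and `I` the ideal of `R⟨X₁,...,Xₙ⟩` generated by a subset `G ⊆ D⟨X⟩` which is
a monic Gröbner basis of `I` in `R⟨X⟩`.  Put `Λ = (D⟨X⟩ + I)/I ⊆ R⟨X⟩/I`.  Then for any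
proper ideal `ω` of `D` with `G ⊄ ωD⟨X⟩`, there is an isomorphism of `k`-algebras
`Λ/ωΛ ≅ k⟨X⟩/⟨Ḡ⟩`, where `k = D/ω` and `Ḡ` is the canonical image of `G` in
`D⟨X⟩/ωD⟨X⟩ ≅ k⟨X⟩` (the isomorphism being one of `k`-algebras is expressed by its
compatibility with the two structure maps from `D`). -/
theorem good_reduction_iso {R : Type} [CommRing R] {n : ℕ} (o : MonomialOrdering n)
    (D : Subring R) (G : Set (FreeAlg ↥D n)) (I : TwoSidedIdeal (FreeAlg R n))
    (hgen : I = TwoSidedIdeal.span (⇑(coeffIncl ↥D R n) '' G))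
    (hGB : IsMonicGB o (⇑(coeffIncl ↥D R n) '' G) I)
    (ω : Ideal ↥D) (hω : ω ≠ ⊤)
    (hGω : ¬ ∀ g ∈ G, ∀ u : Word n, g.coeff u ∈ ω) :
    ∃ e : LamQuot D ω I ≃+*
        RingQuot (fun a b : FreeAlg (↥D ⧸ ω) n =>
          a ∈ ⇑(coeffIncl ↥D (↥D ⧸ ω) n) '' G ∧ b = 0),
      ∀ d : ↥D,
        e (RingQuot.mkRingHom _ (LamStruct D I d)) =
          RingQuot.mkRingHom _
            (MonoidAlgebra.singleOneRingHom (Ideal.Quotient.mk ω d)) :=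
  good_reduction_iso_general o D G I hGB ω
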